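/- arXiv:2403.15877 — 2 statements merged into one kernel-verified Lean document; each statement's English description precedes it below -/
import Mathlib

section
/- (IPSS cubic bound) Under the hypotheses of the abstract IPSS bound with m = 3 and B ≥ 3, E(FP) ≤ (1/τ) ∫_Λ ( q(λ)^2/(B^2 p) + 3(B−1)q(λ)^4/(B^2 p^3) + (B−1)(B−2)q(λ)^6/(B^2 p^5) ) μ(dλ). -/
/-!
Fix a null variable `j ∉ S` and `λ`. Since `h₃(π̂) ≤ (∑_b U_b / B)³` and the `U_b` are `0/1`-valued,
expanding the cube writes `h₃(π̂)` below `B⁻³ ∑_{a,b,c} 1{U_x = 1 for all x ∈ {a,b,c}}`, whose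
expectation the joint bounds control by `(q/p)^(2|{a,b,c}|)`. Counting triples by the size of
`{a,b,c}` (`B`, `3B(B-1)` and `B(B-1)(B-2)` of them) gives the per-variable bound; Fubini in `λ`,
Markov's inequality at the threshold `τ`, and at most `p` null variables finish the proof.
-/

open MeasureTheory Finset

theorem Finset.sum_apply_card_insert {α R : Type*} [Fintype α] [DecidableEq α] [Ring R]
    (s : Finset α) (g : ℕ → R) :
    ∑ a, g #(insert a s) = #s * g #s + (Fintype.card α - #s) * g (#s + 1) := by
  rw [← sum_add_sum_compl s]
  have hin : ∀ a ∈ s, g #(insert a s) = g #s := fun a ha => by rw [insert_eq_of_mem ha]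
  have hout : ∀ a ∈ sᶜ, g #(insert a s) = g (#s + 1) := fun a ha =>
    by rw [card_insert_of_notMem (mem_compl.mp ha)]
  rw [sum_congr rfl hin, sum_congr rfl hout, sum_const, sum_const, card_compl, nsmul_eq_mul,
    nsmul_eq_mul, Nat.cast_sub (card_le_univ s)]

theorem Finset.sum_sum_sum_apply_card_triple {α R : Type*} [Fintype α] [DecidableEq α] [CommRing R]
    (g : ℕ → R) :
    ∑ a : α, ∑ b : α, ∑ c : α, g #{a, b, c} =
      Fintype.card α * g 1 + 3 * Fintype.card α * (Fintype.card α - 1) * g 2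
        + Fintype.card α * (Fintype.card α - 1) * (Fintype.card α - 2) * g 3 := by
  -- after reversing, each sum from the inside out inserts one more element into the set
  have hrev : ∀ a b c : α, ({a, b, c} : Finset α) = {c, b, a} := fun a b c => by
    ext; simp only [mem_insert, mem_singleton]; tauto
  have hpair : ∀ a : α, ∑ b, (#{b, a} * g #{b, a} + (Fintype.card α - #{b, a}) * g (#{b, a} + 1))
      = g 1 + 3 * (Fintype.card α - 1) * g 2 + (Fintype.card α - 1) * (Fintype.card α - 2) * g 3 :=
    fun a =>
      (sum_apply_card_insert {a} fun k => (k : R) * g k + (Fintype.card α - k) * g (k + 1)).trans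
      (by simp only [card_singleton]; push_cast; ring)
  simp only [hrev, sum_apply_card_insert _ g, hpair, sum_const, card_univ, nsmul_eq_mul]
  ring

theorem Finset.prod_insert_of_isIdempotentElem {α M : Type*} [DecidableEq α] [CommMonoid M]
    {f : α → M} (hf : ∀ a, IsIdempotentElem (f a)) (a : α) (s : Finset α) :
    ∏ x ∈ insert a s, f x = f a * ∏ x ∈ s, f x := by
  by_cases ha : a ∈ s
  · rw [insert_eq_of_mem ha, ← mul_prod_erase s f ha, ← mul_assoc, (hf a).eq]
  · exact prod_insert ha

theorem Finset.sum_pow_three_eq_sum_prod_of_isIdempotentElem {α R : Type*} [Fintype α]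
    [DecidableEq α] [CommSemiring R] {f : α → R}
    (hf : ∀ a, IsIdempotentElem (f a)) :
    (∑ a, f a) ^ 3 = ∑ a, ∑ b, ∑ c, ∏ x ∈ {a, b, c}, f x := by
  rw [pow_three, sum_mul_sum, sum_mul_sum]
  simp only [mul_sum, prod_insert_of_isIdempotentElem hf, prod_singleton]

section JointSelection

variable {Ω ι : Type*} {V : ι → Ω → ℝ}

theorem prod_eq_indicator_of_forall_eq_zero_or_eq_one (h01 : ∀ b ω, V b ω = 0 ∨ V b ω = 1)
    (T : Finset ι) (ω : Ω) :
    ∏ b ∈ T, V b ω = {ω | ∀ b ∈ T, V b ω = 1}.indicator 1 ω := by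
  by_cases h : ω ∈ {ω | ∀ b ∈ T, V b ω = 1}
  · rw [Set.indicator_of_mem h, prod_eq_one h, Pi.one_apply]
  · obtain ⟨b, hb, hne⟩ := not_forall₂.mp h
    rw [Set.indicator_of_notMem h, prod_eq_zero hb ((h01 b ω).resolve_right hne)]

theorem measurableSet_forall_mem_eq_one [MeasurableSpace Ω] (hV : ∀ b, Measurable (V b))
    (T : Finset ι) : MeasurableSet {ω | ∀ b ∈ T, V b ω = 1} := by
  simp only [Set.ofPred_forall]
  exact Finset.measurableSet_biInter T fun b _ => hV b (measurableSet_singleton 1)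

variable [Fintype ι] [DecidableEq ι]

theorem sum_pow_three_eq_sum_indicator (h01 : ∀ b ω, V b ω = 0 ∨ V b ω = 1) (ω : Ω) :
    (∑ b, V b ω) ^ 3 =
      ∑ a, ∑ b, ∑ c, {ω | ∀ x ∈ ({a, b, c} : Finset ι), V x ω = 1}.indicator 1 ω := by
  have hidem : ∀ b, IsIdempotentElem (V b ω) := fun b => by
    rcases h01 b ω with h | h <;> rw [h]
    exacts [IsIdempotentElem.zero, IsIdempotentElem.one]
  simp only [sum_pow_three_eq_sum_prod_of_isIdempotentElem hidem,
    prod_eq_indicator_of_forall_eq_zero_or_eq_one h01]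

variable [MeasurableSpace Ω] (P : Measure Ω) [IsFiniteMeasure P]

theorem integrable_sum_pow_three (hV : ∀ b, Measurable (V b))
    (h01 : ∀ b ω, V b ω = 0 ∨ V b ω = 1) :
    Integrable (fun ω => (∑ b, V b ω) ^ 3) P := by
  simp only [sum_pow_three_eq_sum_indicator h01]
  refine integrable_finsetSum _ fun a _ => integrable_finsetSum _ fun b _ =>
    integrable_finsetSum _ fun c _ => ?_
  exact (integrable_const (1:ℝ)).indicator (measurableSet_forall_mem_eq_one hV _)

theorem integral_sum_pow_three_le (hV : ∀ b, Measurable (V b))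
    (h01 : ∀ b ω, V b ω = 0 ∨ V b ω = 1) {g : ℕ → ℝ} (hg : ∀ k, 0 ≤ g k)
    (hjoint : ∀ T : Finset ι, T.Nonempty → #T ≤ 3 →
      P {ω | ∀ b ∈ T, V b ω = 1} ≤ ENNReal.ofReal (g #T)) :
    ∫ ω, (∑ b, V b ω) ^ 3 ∂P ≤
      Fintype.card ι * g 1 + 3 * Fintype.card ι * (Fintype.card ι - 1) * g 2
        + Fintype.card ι * (Fintype.card ι - 1) * (Fintype.card ι - 2) * g 3 := by
  have hA := measurableSet_forall_mem_eq_one hV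
  have hint : ∀ T : Finset ι, Integrable ({ω | ∀ b ∈ T, V b ω = 1}.indicator 1) P :=
    fun T => (integrable_const (1:ℝ)).indicator (hA T)
  simp only [sum_pow_three_eq_sum_indicator h01]
  rw [← sum_sum_sum_apply_card_triple]
  rw [integral_finsetSum _ fun a _ => integrable_finsetSum _ fun b _ =>
    integrable_finsetSum _ fun c _ => hint _]
  gcongr with a
  rw [integral_finsetSum _ fun b _ => integrable_finsetSum _ fun c _ => hint _]
  gcongr with b
  rw [integral_finsetSum _ fun c _ => hint _]
  gcongr with c
  rw [integral_indicator_one (hA _)]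
  exact ENNReal.toReal_le_of_le_ofReal (hg _) (hjoint _ (insert_nonempty _ _) card_le_three)

end JointSelection

noncomputable def cubicSelection (x : ℝ) : ℝ := if x ≥ 1 / 2 then (2 * x - 1) ^ 3 else 0

theorem cubicSelection_nonneg (x : ℝ) : 0 ≤ cubicSelection x := by
  unfold cubicSelection
  split_ifs with hx
  · exact pow_nonneg (by linarith) 3
  · exact le_rfl

theorem cubicSelection_le_pow_three {x s : ℝ} (hs : 0 ≤ s) (hx : x ≤ (1 + s) / 2) :
    cubicSelection x ≤ s ^ 3 := by
  unfold cubicSelection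
  split_ifs with hx'
  · exact pow_le_pow_left₀ (by linarith) (by linarith) 3
  · positivity

theorem measurable_cubicSelection : Measurable cubicSelection :=
  Measurable.ite (measurableSet_le measurable_const measurable_id)
    (((measurable_id.const_mul 2).sub_const 1).pow_const 3) measurable_const

theorem sum_div_card_mem_Icc_of_forall_eq_zero_or_eq_one {ι : Type*} [Fintype ι] {v : ι → ℝ}
    (h01 : ∀ b, v b = 0 ∨ v b = 1) : (∑ b, v b) / Fintype.card ι ∈ Set.Icc 0 1 := by
  have hv : ∀ b, v b ∈ Set.Icc (0 : ℝ) 1 := fun b => by rcases h01 b with h | h <;> simp [h]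
  refine ⟨div_nonneg (sum_nonneg fun b _ => (hv b).1) (Nat.cast_nonneg _),
    div_le_one_of_le₀ ?_ (Nat.cast_nonneg _)⟩
  simpa using sum_le_card_nsmul univ v 1 fun b _ => (hv b).2

theorem cubicSelection_mem_Icc_of_le_mean {ι : Type*} [Fintype ι] {v : ι → ℝ}
    (h01 : ∀ b, v b = 0 ∨ v b = 1) {x : ℝ} (hx : x ≤ (1 + (∑ b, v b) / Fintype.card ι) / 2) :
    cubicSelection x ∈ Set.Icc 0 1 :=
  have hs := sum_div_card_mem_Icc_of_forall_eq_zero_or_eq_one h01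
  ⟨cubicSelection_nonneg x, (cubicSelection_le_pow_three hs.1 hx).trans (pow_le_one₀ hs.1 hs.2)⟩

theorem integral_cubicSelection_le {Ω ι : Type*} [MeasurableSpace Ω] [Fintype ι] [DecidableEq ι]
    (P : Measure Ω) [IsFiniteMeasure P] {V : ι → Ω → ℝ} (hV : ∀ b, Measurable (V b))
    (h01 : ∀ b ω, V b ω = 0 ∨ V b ω = 1) {g : ℕ → ℝ} (hg : ∀ k, 0 ≤ g k)
    (hjoint : ∀ T : Finset ι, T.Nonempty → #T ≤ 3 →
      P {ω | ∀ b ∈ T, V b ω = 1} ≤ ENNReal.ofReal (g #T))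
    {X : Ω → ℝ} (hX : ∀ ω, X ω ≤ (1 + (∑ b, V b ω) / Fintype.card ι) / 2) :
    ∫ ω, cubicSelection (X ω) ∂P ≤
      (Fintype.card ι * g 1 + 3 * Fintype.card ι * (Fintype.card ι - 1) * g 2
        + Fintype.card ι * (Fintype.card ι - 1) * (Fintype.card ι - 2) * g 3)
        / (Fintype.card ι : ℝ) ^ 3 := by
  calc ∫ ω, cubicSelection (X ω) ∂P
      ≤ ∫ ω, ((∑ b, V b ω) / Fintype.card ι) ^ 3 ∂P := by
        refine integral_mono_of_nonneg (ae_of_all _ fun ω => cubicSelection_nonneg _) ?_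
          (ae_of_all _ fun ω => cubicSelection_le_pow_three
            (sum_div_card_mem_Icc_of_forall_eq_zero_or_eq_one (h01 · ω)).1 (hX ω))
        simpa only [div_pow] using (integrable_sum_pow_three P hV h01).div_const _
    _ = (∫ ω, (∑ b, V b ω) ^ 3 ∂P) / (Fintype.card ι : ℝ) ^ 3 := by
        simp only [div_pow, integral_div]
    _ ≤ _ := by gcongr; exact integral_sum_pow_three_le P hV h01 hg hjoint

theorem integral_card_filter_le {Ω ι : Type*} [MeasurableSpace Ω] (P : Measure Ω)
    (s : Finset ι) {f : ι → Ω → ℝ} (hf : ∀ j ∈ s, Integrable (f j) P)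
    (hf0 : ∀ j ∈ s, ∀ ω, 0 ≤ f j ω) {τ : ℝ} (hτ : 0 < τ) :
    ∫ ω, (#{j ∈ s | τ ≤ f j ω} : ℝ) ∂P ≤ 1 / τ * ∑ j ∈ s, ∫ ω, f j ω ∂P := by
  have hpoint : ∀ ω, (#{j ∈ s | τ ≤ f j ω} : ℝ) ≤ ∑ j ∈ s, f j ω / τ := fun ω => by
    rw [card_filter]
    push_cast
    refine sum_le_sum fun j hj => ?_
    split_ifs with h
    · exact (one_le_div hτ).mpr h
    · exact div_nonneg (hf0 j hj ω) hτ.le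
  calc ∫ ω, (#{j ∈ s | τ ≤ f j ω} : ℝ) ∂P ≤ ∫ ω, ∑ j ∈ s, f j ω / τ ∂P :=
        integral_mono_of_nonneg (ae_of_all _ fun ω => Nat.cast_nonneg _)
          (integrable_finsetSum _ fun j hj => (hf j hj).div_const τ) (ae_of_all _ hpoint)
    _ = 1 / τ * ∑ j ∈ s, ∫ ω, f j ω ∂P := by
        rw [integral_finsetSum _ fun j hj => (hf j hj).div_const τ, mul_sum]
        simp only [integral_div]
        exact sum_congr rfl fun j _ => by ring

theorem integral_card_filter_integral_le {Ω Λ ι : Type*} [MeasurableSpace Ω] [MeasurableSpace Λ]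
    (P : Measure Ω) [SFinite P] (μ : Measure Λ) [SFinite μ] (s : Finset ι)
    {F : ι → Λ × Ω → ℝ} (hF : ∀ j ∈ s, Integrable (F j) (μ.prod P))
    (hF0 : ∀ j ∈ s, ∀ x, 0 ≤ F j x) {G : Λ → ℝ} (hG : Integrable G μ)
    (hFG : ∀ j ∈ s, ∀ l, ∫ ω, F j (l, ω) ∂P ≤ G l) {τ : ℝ} (hτ : 0 < τ) :
    ∫ ω, (#{j ∈ s | τ ≤ ∫ l, F j (l, ω) ∂μ} : ℝ) ∂P ≤ 1 / τ * (#s * ∫ l, G l ∂μ) :=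
  calc ∫ ω, (#{j ∈ s | τ ≤ ∫ l, F j (l, ω) ∂μ} : ℝ) ∂P
      ≤ 1 / τ * ∑ j ∈ s, ∫ ω, ∫ l, F j (l, ω) ∂μ ∂P :=
        integral_card_filter_le P s (fun j hj => (hF j hj).integral_prod_right)
          (fun j hj ω => integral_nonneg fun l => hF0 j hj _) hτ
    _ ≤ 1 / τ * ∑ j ∈ s, ∫ l, G l ∂μ := by
        gcongr with j hj
        rw [← integral_integral_swap (f := fun l ω => F j (l, ω)) (hF j hj)]
        exact integral_mono (hF j hj).integral_prod_left hG (hFG j hj)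
    _ = 1 / τ * (#s * ∫ l, G l ∂μ) := by rw [sum_const, nsmul_eq_mul]

theorem Continuous.integrable_comp_of_mem_Icc {Λ : Type*} [MeasurableSpace Λ] {μ : Measure Λ}
    [IsFiniteMeasure μ] {f : ℝ → ℝ} (hf : Continuous f) {X : Λ → ℝ} (hX : Measurable X) {a b : ℝ}
    (hab : ∀ l, X l ∈ Set.Icc a b) : Integrable (fun l => f (X l)) μ := by
  obtain ⟨C, hC⟩ := isCompact_Icc.exists_bound_of_continuousOn hf.continuousOn
  exact Integrable.of_bound (hf.measurable.comp hX).aestronglyMeasurable C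
    (ae_of_all _ fun l => hC _ (hab l))

noncomputable def ipssCubicBound (B p : ℕ) (x : ℝ) : ℝ :=
  x ^ 2 / ((B:ℝ) ^ 2 * p) + 3 * ((B:ℝ) - 1) * x ^ 4 / ((B:ℝ) ^ 2 * (p:ℝ) ^ 3)
    + ((B:ℝ) - 1) * ((B:ℝ) - 2) * x ^ 6 / ((B:ℝ) ^ 2 * (p:ℝ) ^ 5)

theorem continuous_ipssCubicBound (B p : ℕ) : Continuous (ipssCubicBound B p) := by
  unfold ipssCubicBound; fun_prop

theorem ipssCubicBound_nonneg {B : ℕ} (hB : 2 ≤ B) (p : ℕ) (x : ℝ) : 0 ≤ ipssCubicBound B p x := by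
  have h1 : (0:ℝ) ≤ B - 1 := by rw [sub_nonneg]; exact_mod_cast (by omega : 1 ≤ B)
  have h2 : (0:ℝ) ≤ B - 2 := by rw [sub_nonneg]; exact_mod_cast hB
  unfold ipssCubicBound; positivity

theorem integral_cubicSelection_le_ipssCubicBound_div {Ω : Type*} [MeasurableSpace Ω]
    (P : Measure Ω) [IsFiniteMeasure P] {B p : ℕ} (hB : B ≠ 0) (hp : p ≠ 0)
    {V : Fin B → Ω → ℝ} (hV : ∀ b, Measurable (V b)) (h01 : ∀ b ω, V b ω = 0 ∨ V b ω = 1)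
    {x : ℝ} (hjoint : ∀ T : Finset (Fin B), T.Nonempty → #T ≤ 3 →
      P {ω | ∀ b ∈ T, V b ω = 1} ≤ ENNReal.ofReal ((x / p) ^ (2 * #T)))
    {X : Ω → ℝ} (hX : ∀ ω, X ω ≤ (1 + (∑ b, V b ω) / B) / 2) :
    ∫ ω, cubicSelection (X ω) ∂P ≤ ipssCubicBound B p x / p := by
  convert integral_cubicSelection_le P hV h01 (g := fun k => (x / p) ^ (2 * k))
    (fun k => by rw [pow_mul]; positivity) hjoint (by simpa using hX) using 1
  simp only [ipssCubicBound, Fintype.card_fin, Nat.reduceMul, div_pow]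
  field_simp

open Classical in
theorem stmt16_general {Ω Λ : Type*} [MeasurableSpace Ω] [MeasurableSpace Λ]
    (P : Measure Ω) [IsProbabilityMeasure P]
    (μ : Measure Λ) [IsProbabilityMeasure μ]
    (p : ℕ) (hp : 1 ≤ p) (S : Finset (Fin p))
    (τ : ℝ) (hτ : τ ∈ Set.Ioc (0:ℝ) 1) (B : ℕ) (hB : 3 ≤ B)
    (q : Λ → ℝ) (hqmeas : Measurable q) (hq : ∀ l, q l ∈ Set.Icc (0:ℝ) p)
    (U : Fin p → Fin B → Λ → Ω → ℝ)
    (hUmeas : ∀ j b, Measurable fun x : Λ × Ω => U j b x.1 x.2)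
    (hU01 : ∀ j b l ω, U j b l ω = 0 ∨ U j b l ω = 1)
    (hjoint : ∀ j ∉ S, ∀ l : Λ, ∀ T : Finset (Fin B), T.Nonempty → T.card ≤ 3 →
      P {ω | ∀ b ∈ T, U j b l ω = 1} ≤ ENNReal.ofReal ((q l / p) ^ (2 * T.card)))
    (pihat : Fin p → Λ → Ω → ℝ)
    (hmeas : ∀ j, Measurable fun x : Λ × Ω => pihat j x.1 x.2)
    (hle : ∀ j ∉ S, ∀ l ω,
      pihat j l ω ≤ (1 + (∑ b, U j b l ω) / B) / 2) :
    ∫ ω, ((Finset.univ.filter (fun j => j ∉ S ∧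
        τ ≤ ∫ l, (if pihat j l ω ≥ 1/2 then (2 * pihat j l ω - 1) ^ 3 else 0) ∂μ)).card
          : ℝ) ∂P
      ≤ (1 / τ) * ∫ l,
          (q l ^ 2 / ((B:ℝ) ^ 2 * p) + 3 * ((B:ℝ) - 1) * q l ^ 4 / ((B:ℝ) ^ 2 * (p:ℝ) ^ 3)
            + ((B:ℝ) - 1) * ((B:ℝ) - 2) * q l ^ 6 / ((B:ℝ) ^ 2 * (p:ℝ) ^ 5)) ∂μ := by
  change ∫ ω, (#{j | j ∉ S ∧ τ ≤ ∫ l, cubicSelection (pihat j l ω) ∂μ} : ℝ) ∂P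
    ≤ 1 / τ * ∫ l, ipssCubicBound B p (q l) ∂μ
  obtain ⟨hτ0, -⟩ := hτ
  have hp0 : (p : ℝ) ≠ 0 := by positivity
  set F : Fin p → Λ × Ω → ℝ := fun j x => cubicSelection (pihat j x.1 x.2)
  set G : Λ → ℝ := fun l => ipssCubicBound B p (q l) / p
  have hF : ∀ j ∈ Sᶜ, Integrable (F j) (μ.prod P) := fun j hj =>
    Integrable.of_mem_Icc 0 1 (measurable_cubicSelection.comp (hmeas j)).aemeasurable <|
      ae_of_all _ fun x => cubicSelection_mem_Icc_of_le_mean (hU01 j · x.1 x.2)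
        (by simpa using hle j (mem_compl.1 hj) x.1 x.2)
  have hG : Integrable G μ :=
    ((continuous_ipssCubicBound B p).integrable_comp_of_mem_Icc hqmeas hq).div_const _
  have hFG : ∀ j ∈ Sᶜ, ∀ l, ∫ ω, F j (l, ω) ∂P ≤ G l := fun j hj l =>
    integral_cubicSelection_le_ipssCubicBound_div P (by omega) (by omega)
      (fun b => (hUmeas j b).comp measurable_prodMk_left) (hU01 j · l)
      (hjoint j (mem_compl.1 hj) l) (hle j (mem_compl.1 hj) l)
  have hG0 : 0 ≤ ∫ l, G l ∂μ :=
    integral_nonneg fun l => div_nonneg (ipssCubicBound_nonneg (by omega) p _) (Nat.cast_nonneg p)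
  calc ∫ ω, (#{j | j ∉ S ∧ τ ≤ ∫ l, cubicSelection (pihat j l ω) ∂μ} : ℝ) ∂P
      = ∫ ω, (#{j ∈ Sᶜ | τ ≤ ∫ l, F j (l, ω) ∂μ} : ℝ) ∂P := by
        congr! 4 with ω
        ext j
        simp [F]
    _ ≤ 1 / τ * (#Sᶜ * ∫ l, G l ∂μ) :=
        integral_card_filter_integral_le P μ Sᶜ hF (fun j _ _ => cubicSelection_nonneg _) hG hFG hτ0
    _ ≤ 1 / τ * (p * ∫ l, G l ∂μ) := by
        gcongr
        simpa using card_le_univ Sᶜ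
    _ = 1 / τ * ∫ l, ipssCubicBound B p (q l) ∂μ := by
        rw [integral_div, mul_div_cancel₀ _ hp0]

open Classical in
/-- IPSS cubic bound (Theorem 2, `m = 3`): under the abstract IPSS hypotheses with
joint-selection bounds for `|T| ≤ 3` and selection via `h_3(x) = (2x−1)³ 1(x ≥ 1/2)`,
`E(FP) ≤ (1/τ) ∫_Λ ( q²/(B²p) + 3(B−1)q⁴/(B²p³) + (B−1)(B−2)q⁶/(B²p⁵) ) μ(dλ)`. -/
theorem stmt16 {Ω Λ : Type*} [MeasurableSpace Ω] [MeasurableSpace Λ]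
    (P : Measure Ω) [IsProbabilityMeasure P]
    (μ : Measure Λ) [IsProbabilityMeasure μ]
    (p : ℕ) (hp : 1 ≤ p) (S : Finset (Fin p))
    (τ : ℝ) (hτ : τ ∈ Set.Ioc (0:ℝ) 1) (B : ℕ) (hB : 3 ≤ B)
    (q : Λ → ℝ) (hqmeas : Measurable q) (hq : ∀ l, q l ∈ Set.Icc (0:ℝ) p)
    (U : Fin p → Fin B → Λ → Ω → ℝ)
    (hUmeas : ∀ j b, Measurable fun x : Λ × Ω => U j b x.1 x.2)
    (hU01 : ∀ j b l ω, U j b l ω = 0 ∨ U j b l ω = 1)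
    (hjoint : ∀ j ∉ S, ∀ l : Λ, ∀ T : Finset (Fin B), T.Nonempty → T.card ≤ 3 →
      P {ω | ∀ b ∈ T, U j b l ω = 1} ≤ ENNReal.ofReal ((q l / p) ^ (2 * T.card)))
    (pihat : Fin p → Λ → Ω → ℝ)
    (hmeas : ∀ j, Measurable fun x : Λ × Ω => pihat j x.1 x.2)
    (hrange : ∀ j l ω, pihat j l ω ∈ Set.Icc (0:ℝ) 1)
    (hle : ∀ j ∉ S, ∀ l ω,
      pihat j l ω ≤ (1 + (∑ b, U j b l ω) / B) / 2) :
    ∫ ω, ((Finset.univ.filter (fun j => j ∉ S ∧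
        τ ≤ ∫ l, (if pihat j l ω ≥ 1/2 then (2 * pihat j l ω - 1) ^ 3 else 0) ∂μ)).card
          : ℝ) ∂P
      ≤ (1 / τ) * ∫ l,
          (q l ^ 2 / ((B:ℝ) ^ 2 * p) + 3 * ((B:ℝ) - 1) * q l ^ 4 / ((B:ℝ) ^ 2 * (p:ℝ) ^ 3)
            + ((B:ℝ) - 1) * ((B:ℝ) - 2) * q l ^ 6 / ((B:ℝ) ^ 2 * (p:ℝ) ^ 5)) ∂μ :=
  stmt16_general P μ p hp S τ hτ B hB q hqmeas hq U hUmeas hU01 hjoint pihat hmeas hle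
end

section
/- (IPSS whole-function bound) Let τ ∈ (0,1], m, B ≥ 1, and suppose for j ∈ S^c the measurable indicators V_{j,b}(λ), b = 1,...,2B, satisfy P(∀ b ∈ T : V_{j,b}(λ) = 1) ≤ (q(λ)/p)^{|T|} for every nonempty T ⊆ {1,...,2B} with |T| ≤ m and all λ ∈ Λ. With π̂_j(λ) = (1/(2B))∑_{b=1}^{2B} V_{j,b}(λ), the set Ŝ = {j : ∫_Λ π̂_j(λ)^m μ(dλ) ≥ τ} satisfies E|Ŝ ∩ S^c| ≤ (p/(τ (2B)^m)) ∑_{k_1+⋯+k_{2B}=m} (m!/(k_1!⋯k_{2B}!)) ∫_Λ (q(λ)/p)^{∑_b 1(k_b≠0)} μ(dλ). -/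
/-!
Because the `V_{j,b}` take values in `{0, 1}`, the multinomial theorem writes `(∑_b V_{j,b})^m` as
a combination of products `∏_b V_{j,b}^{k_b}`, each of which is the indicator that every `V_{j,b}`
with `k_b ≠ 0` equals one; the joint-selection bound therefore controls its expectation by
`(q/p)^{#{b | k_b ≠ 0}}`. Exchanging the integrals over `Ω` and `Λ` bounds `E ∫ π̂_j^m dμ`, and
Markov's inequality, summed over `j ∉ S`, bounds the expected number of false selections.
-/
open MeasureTheory Finset

section Moments

variable {ι Ω : Type*} [Fintype ι] [MeasurableSpace Ω]

theorem prod_pow_eq_ite_of_zero_or_one {x : ι → ℝ} (hx : ∀ b, x b = 0 ∨ x b = 1) (k : ι → ℕ) :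
    ∏ b, x b ^ k b = if ∀ b ∈ ({b | k b ≠ 0} : Finset ι), x b = 1 then 1 else 0 := by
  split_ifs with h
  · refine prod_eq_one fun b _ => ?_
    by_cases hb : k b = 0
    · rw [hb, pow_zero]
    · rw [h b (by simpa using hb), one_pow]
  · push Not at h
    obtain ⟨b, hb, hb1⟩ := h
    exact prod_eq_zero (mem_univ b)
      (by rw [(hx b).resolve_right hb1, zero_pow (by simpa using hb)])

theorem integral_prod_pow_eq_measureReal (P : Measure Ω) [IsFiniteMeasure P]
    {X : ι → Ω → ℝ} (hX : ∀ b, Measurable (X b)) (h01 : ∀ b ω, X b ω = 0 ∨ X b ω = 1)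
    (k : ι → ℕ) :
    ∫ ω, ∏ b, X b ω ^ k b ∂P = P.real {ω | ∀ b ∈ ({b | k b ≠ 0} : Finset ι), X b ω = 1} := by
  have hmeas : MeasurableSet {ω | ∀ b ∈ ({b | k b ≠ 0} : Finset ι), X b ω = 1} := by
    measurability
  rw [← integral_indicator_one hmeas]
  congr with ω
  rw [prod_pow_eq_ite_of_zero_or_one (h01 · ω), Set.indicator_apply]
  rfl

theorem card_filter_ne_zero_le_of_mem_piAntidiag [DecidableEq ι] {m : ℕ} {k : ι → ℕ}
    (hk : k ∈ univ.piAntidiag m) : #{b | k b ≠ 0} ≤ m := by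
  calc #{b | k b ≠ 0} = ∑ b with k b ≠ 0, 1 := card_eq_sum_ones _
    _ ≤ ∑ b with k b ≠ 0, k b :=
        sum_le_sum fun b hb => Nat.one_le_iff_ne_zero.2 (mem_filter.1 hb).2
    _ ≤ ∑ b, k b := sum_le_sum_of_subset (subset_univ _)
    _ = m := (mem_piAntidiag.1 hk).1

theorem integral_sum_pow_le_of_measure_forall_le [DecidableEq ι] (P : Measure Ω)
    [IsProbabilityMeasure P]
    {X : ι → Ω → ℝ} (hX : ∀ b, Measurable (X b)) (h01 : ∀ b ω, X b ω = 0 ∨ X b ω = 1)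
    {m : ℕ} {r : ℝ} (hr : 0 ≤ r)
    (hjoint : ∀ T : Finset ι, T.Nonempty → #T ≤ m →
      P {ω | ∀ b ∈ T, X b ω = 1} ≤ ENNReal.ofReal (r ^ #T)) :
    ∫ ω, (∑ b, X b ω) ^ m ∂P ≤
      ∑ k ∈ (univ : Finset ι).piAntidiag m,
        (Nat.multinomial univ k : ℝ) * r ^ #{b | k b ≠ 0} := by
  have hjoint' : ∀ T : Finset ι, #T ≤ m → P.real {ω | ∀ b ∈ T, X b ω = 1} ≤ r ^ #T := by
    intro T hT
    obtain rfl | hne := T.eq_empty_or_nonempty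
    · simp
    · exact ENNReal.toReal_le_of_le_ofReal (pow_nonneg hr _) (hjoint T hne hT)
  have hint : ∀ k : ι → ℕ, Integrable (fun ω => ∏ b, X b ω ^ k b) P := fun k =>
    .of_mem_Icc 0 1 (by fun_prop) (.of_forall fun ω => by
      rw [prod_pow_eq_ite_of_zero_or_one (h01 · ω)]; split_ifs <;> simp)
  simp_rw [sum_pow_eq_sum_piAntidiag]
  rw [integral_finsetSum _ fun k _ => (hint k).const_mul _]
  refine sum_le_sum fun k hk => ?_
  rw [integral_const_mul, integral_prod_pow_eq_measureReal P hX h01]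
  exact mul_le_mul_of_nonneg_left (hjoint' _ (card_filter_ne_zero_le_of_mem_piAntidiag hk))
    (Nat.cast_nonneg _)

end Moments

theorem avg_pow_mem_Icc_of_zero_or_one {ι : Type*} [Fintype ι] {x : ι → ℝ}
    (hx : ∀ b, x b = 0 ∨ x b = 1) (m : ℕ) : ((∑ b, x b) / Fintype.card ι) ^ m ∈ Set.Icc 0 1 := by
  have hx01 : ∀ b, x b ∈ Set.Icc 0 1 := fun b => by rcases hx b with h | h <;> simp [h]
  have h0 : 0 ≤ (∑ b, x b) / Fintype.card ι :=
    div_nonneg (sum_nonneg fun b _ => (hx01 b).1) (Nat.cast_nonneg _)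
  have h1 : (∑ b, x b) / Fintype.card ι ≤ 1 :=
    div_le_one_of_le₀ ((sum_le_sum fun b _ => (hx01 b).2).trans (by simp)) (Nat.cast_nonneg _)
  exact ⟨pow_nonneg h0 m, pow_le_one₀ h0 h1⟩

theorem card_filter_le_sum_div {ι : Type*} (s : Finset ι) {f : ι → ℝ} (hf : ∀ j ∈ s, 0 ≤ f j)
    {τ : ℝ} (hτ : 0 < τ) : (#{j ∈ s | τ ≤ f j} : ℝ) ≤ ∑ j ∈ s, f j / τ := by
  rw [card_filter, Nat.cast_sum]
  refine sum_le_sum fun j hj => ?_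
  split_ifs with h
  · simpa [one_le_div hτ] using h
  · simpa using div_nonneg (hf j hj) hτ.le

theorem integral_mem_Icc_of_mem_Icc {α : Type*} [MeasurableSpace α] {μ : Measure α}
    [IsProbabilityMeasure μ] {f : α → ℝ} (hf : ∀ x, f x ∈ Set.Icc 0 1) :
    ∫ x, f x ∂μ ∈ Set.Icc 0 1 :=
  ⟨integral_nonneg fun x => (hf x).1, (integral_mono_of_nonneg (.of_forall fun x => (hf x).1)
    (integrable_const 1) (.of_forall fun x => (hf x).2)).trans (by simp)⟩

theorem integral_card_filter_le_sum_integral_div {ι Ω : Type*} [MeasurableSpace Ω]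
    (P : Measure Ω) (s : Finset ι) {f : ι → Ω → ℝ} (hf0 : ∀ j ω, 0 ≤ f j ω)
    (hf : ∀ j, Integrable (f j) P) {τ : ℝ} (hτ : 0 < τ) :
    ∫ ω, (#{j ∈ s | τ ≤ f j ω} : ℝ) ∂P ≤ ∑ j ∈ s, (∫ ω, f j ω ∂P) / τ := by
  calc ∫ ω, (#{j ∈ s | τ ≤ f j ω} : ℝ) ∂P ≤ ∫ ω, ∑ j ∈ s, f j ω / τ ∂P :=
        integral_mono_of_nonneg (.of_forall fun ω => Nat.cast_nonneg _)
          (integrable_finsetSum _ fun j _ => (hf j).div_const τ)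
          (.of_forall fun ω => card_filter_le_sum_div s (fun j _ => hf0 j ω) hτ)
    _ = ∑ j ∈ s, (∫ ω, f j ω ∂P) / τ := by
        rw [integral_finsetSum _ fun j _ => (hf j).div_const τ]
        simp_rw [integral_div]

section Score

variable {ι Ω Λ : Type*} [Fintype ι] [MeasurableSpace Λ]

noncomputable def ipssScore (μ : Measure Λ) (X : ι → Λ → Ω → ℝ) (m : ℕ) (ω : Ω) : ℝ :=
  ∫ l, ((∑ b, X b l ω) / Fintype.card ι) ^ m ∂μ

variable {μ : Measure Λ} {X : ι → Λ → Ω → ℝ}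

theorem measurable_avg_pow [MeasurableSpace Ω]
    (hX : ∀ b, Measurable fun x : Λ × Ω => X b x.1 x.2) (m : ℕ) :
    Measurable fun x : Λ × Ω => ((∑ b, X b x.1 x.2) / Fintype.card ι) ^ m := by
  fun_prop

theorem ipssScore_mem_Icc [IsProbabilityMeasure μ] (h01 : ∀ b l ω, X b l ω = 0 ∨ X b l ω = 1)
    (m : ℕ) (ω : Ω) : ipssScore μ X m ω ∈ Set.Icc 0 1 :=
  integral_mem_Icc_of_mem_Icc fun l => avg_pow_mem_Icc_of_zero_or_one (h01 · l ω) m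

theorem integrable_ipssScore [MeasurableSpace Ω] [IsProbabilityMeasure μ] (P : Measure Ω)
    [IsFiniteMeasure P] (hX : ∀ b, Measurable fun x : Λ × Ω => X b x.1 x.2)
    (h01 : ∀ b l ω, X b l ω = 0 ∨ X b l ω = 1) (m : ℕ) : Integrable (ipssScore μ X m) P :=
  .of_mem_Icc 0 1 (measurable_avg_pow hX m).stronglyMeasurable.integral_prod_left'.aemeasurable
    (.of_forall (ipssScore_mem_Icc h01 m))

theorem integral_ipssScore_le [MeasurableSpace Ω] [DecidableEq ι] [IsProbabilityMeasure μ]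
    (P : Measure Ω) [IsProbabilityMeasure P] (hX : ∀ b, Measurable fun x : Λ × Ω => X b x.1 x.2)
    (h01 : ∀ b l ω, X b l ω = 0 ∨ X b l ω = 1) {m : ℕ} {r : Λ → ℝ} (hr : Measurable r)
    (hr01 : ∀ l, r l ∈ Set.Icc 0 1)
    (hjoint : ∀ l, ∀ T : Finset ι, T.Nonempty → #T ≤ m →
      P {ω | ∀ b ∈ T, X b l ω = 1} ≤ ENNReal.ofReal (r l ^ #T)) :
    ∫ ω, ipssScore μ X m ω ∂P ≤
      (∑ k ∈ (univ : Finset ι).piAntidiag m,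
        (Nat.multinomial univ k : ℝ) * ∫ l, r l ^ #{b | k b ≠ 0} ∂μ) / Fintype.card ι ^ m := by
  have hXl : ∀ l b, Measurable (X b l) := fun l b => (hX b).comp measurable_prodMk_left
  have hpow_int : ∀ n : ℕ, Integrable (fun l => r l ^ n) μ := fun n =>
    .of_mem_Icc 0 1 (by fun_prop) (.of_forall fun l =>
      ⟨pow_nonneg (hr01 l).1 n, pow_le_one₀ (hr01 l).1 (hr01 l).2⟩)
  have hswap : ∫ ω, ipssScore μ X m ω ∂P =
      ∫ l, ∫ ω, ((∑ b, X b l ω) / Fintype.card ι) ^ m ∂P ∂μ :=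
    integral_integral_swap (.of_mem_Icc 0 1
      ((measurable_avg_pow hX m).comp measurable_swap).aemeasurable
      (.of_forall fun x => avg_pow_mem_Icc_of_zero_or_one (h01 · x.2 x.1) m))
  have hpointwise : ∀ l, ∫ ω, ((∑ b, X b l ω) / Fintype.card ι) ^ m ∂P ≤
      (∑ k ∈ (univ : Finset ι).piAntidiag m,
        (Nat.multinomial univ k : ℝ) * r l ^ #{b | k b ≠ 0}) / Fintype.card ι ^ m := by
    intro l
    simp_rw [div_pow]
    rw [integral_div]
    exact div_le_div_of_nonneg_right (integral_sum_pow_le_of_measure_forall_le P (hXl l)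
      (h01 · l) (hr01 l).1 (hjoint l)) (by positivity)
  rw [hswap]
  refine (integral_mono_of_nonneg (.of_forall fun l => integral_nonneg fun ω =>
    (avg_pow_mem_Icc_of_zero_or_one (h01 · l ω) m).1) ?_ (.of_forall hpointwise)).trans_eq ?_
  · exact (integrable_finsetSum _ fun k _ => (hpow_int _).const_mul _).div_const _
  · rw [integral_div, integral_finsetSum _ fun k _ => (hpow_int _).const_mul _]
    simp_rw [integral_const_mul]

end Score

open Classical in
theorem stmt17_general {Ω Λ : Type*} [MeasurableSpace Ω] [MeasurableSpace Λ]
    (P : Measure Ω) [IsProbabilityMeasure P]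
    (μ : Measure Λ) [IsProbabilityMeasure μ]
    (p : ℕ) (S : Finset (Fin p))
    (τ : ℝ) (hτ : τ ∈ Set.Ioc (0:ℝ) 1) (m B : ℕ)
    (q : Λ → ℝ) (hqmeas : Measurable q) (hq : ∀ l, q l ∈ Set.Icc (0:ℝ) p)
    (V : Fin p → Fin (2 * B) → Λ → Ω → ℝ)
    (hVmeas : ∀ j b, Measurable fun x : Λ × Ω => V j b x.1 x.2)
    (hV01 : ∀ j b l ω, V j b l ω = 0 ∨ V j b l ω = 1)
    (hjoint : ∀ j ∉ S, ∀ l : Λ, ∀ T : Finset (Fin (2 * B)), T.Nonempty → T.card ≤ m →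
      P {ω | ∀ b ∈ T, V j b l ω = 1} ≤ ENNReal.ofReal ((q l / p) ^ T.card))
    (pihat : Fin p → Λ → Ω → ℝ)
    (hpihat : pihat = fun j l ω => (∑ b, V j b l ω) / (2 * B)) :
    ∫ ω, ((Finset.univ.filter (fun j => j ∉ S ∧
        τ ≤ ∫ l, pihat j l ω ^ m ∂μ)).card : ℝ) ∂P
      ≤ ((p : ℝ) / (τ * (2 * (B:ℝ)) ^ m)) *
          ∑ k ∈ Finset.Nat.antidiagonalTuple (2 * B) m,
            (Nat.multinomial Finset.univ k : ℝ) *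
              ∫ l, (q l / p) ^ ((Finset.univ.filter (fun b => k b ≠ 0)).card) ∂μ := by
  have hscore : ∀ j ω, ∫ l, pihat j l ω ^ m ∂μ = ipssScore μ (V j) m ω := fun j ω => by
    simp [hpihat, ipssScore]
  simp only [hscore]
  rw [← piAntidiag_univ_fin_eq_antidiagonalTuple]
  set R := ∑ k ∈ (univ : Finset (Fin (2 * B))).piAntidiag m,
    (Nat.multinomial univ k : ℝ) * ∫ l, (q l / p) ^ #{b | k b ≠ 0} ∂μ
  have hqp : ∀ l, q l / p ∈ Set.Icc 0 1 := fun l =>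
    ⟨div_nonneg (hq l).1 (Nat.cast_nonneg _), div_le_one_of_le₀ (hq l).2 (Nat.cast_nonneg _)⟩
  have hR : 0 ≤ R := sum_nonneg fun k _ => mul_nonneg (Nat.cast_nonneg _)
    (integral_nonneg fun l => pow_nonneg (hqp l).1 _)
  have hE : ∀ j ∉ S, ∫ ω, ipssScore μ (V j) m ω ∂P ≤ R / (2 * B) ^ m := fun j hj => by
    simpa using integral_ipssScore_le P (hVmeas j) (hV01 j) (hqmeas.div_const _) hqp (hjoint j hj)
  calc _ = ∫ ω, (#{j ∈ ({j | j ∉ S} : Finset _) | τ ≤ ipssScore μ (V j) m ω} : ℝ) ∂P := by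
        simp only [filter_filter]
    _ ≤ ∑ j with j ∉ S, (∫ ω, ipssScore μ (V j) m ω ∂P) / τ :=
        integral_card_filter_le_sum_integral_div P _
          (fun j ω => (ipssScore_mem_Icc (hV01 j) m ω).1)
          (fun j => integrable_ipssScore P (hVmeas j) (hV01 j) m) hτ.1
    _ ≤ ∑ _j : Fin p, R / (2 * B) ^ m / τ := by
        refine (sum_le_sum fun j hj => ?_).trans (sum_le_sum_of_subset_of_nonneg
          (filter_subset _ _) fun _ _ _ => div_nonneg (div_nonneg hR (by positivity)) hτ.1.le)
        exact div_le_div_of_nonneg_right (hE j (mem_filter.1 hj).2) hτ.1.le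
    _ = _ := by
        rw [sum_const, card_univ, Fintype.card_fin, nsmul_eq_mul]
        ring

open Classical in
/-- IPSS whole-function bound (Theorem S3): with `π̂_j(λ) = (1/(2B)) ∑_{b<2B} V_{j,b}(λ)`
and joint-selection bounds `P(∀ b ∈ T, V_{j,b}(λ) = 1) ≤ (q(λ)/p)^{|T|}` for nonempty
`T` with `|T| ≤ m`, the selection set `{j : ∫ π̂_j(λ)^m μ(dλ) ≥ τ}` satisfies
`E|Ŝ ∩ S^c| ≤ (p/(τ (2B)^m)) ∑_{k_1+⋯+k_{2B}=m} (m!/(k_1!⋯k_{2B}!)) ∫ (q/p)^{N_k} dμ`. -/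
theorem stmt17 {Ω Λ : Type*} [MeasurableSpace Ω] [MeasurableSpace Λ]
    (P : Measure Ω) [IsProbabilityMeasure P]
    (μ : Measure Λ) [IsProbabilityMeasure μ]
    (p : ℕ) (hp : 1 ≤ p) (S : Finset (Fin p))
    (τ : ℝ) (hτ : τ ∈ Set.Ioc (0:ℝ) 1) (m B : ℕ) (hm : 1 ≤ m) (hB : 1 ≤ B)
    (q : Λ → ℝ) (hqmeas : Measurable q) (hq : ∀ l, q l ∈ Set.Icc (0:ℝ) p)
    (V : Fin p → Fin (2 * B) → Λ → Ω → ℝ)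
    (hVmeas : ∀ j b, Measurable fun x : Λ × Ω => V j b x.1 x.2)
    (hV01 : ∀ j b l ω, V j b l ω = 0 ∨ V j b l ω = 1)
    (hjoint : ∀ j ∉ S, ∀ l : Λ, ∀ T : Finset (Fin (2 * B)), T.Nonempty → T.card ≤ m →
      P {ω | ∀ b ∈ T, V j b l ω = 1} ≤ ENNReal.ofReal ((q l / p) ^ T.card))
    (pihat : Fin p → Λ → Ω → ℝ)
    (hpihat : pihat = fun j l ω => (∑ b, V j b l ω) / (2 * B)) :
    ∫ ω, ((Finset.univ.filter (fun j => j ∉ S ∧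
        τ ≤ ∫ l, pihat j l ω ^ m ∂μ)).card : ℝ) ∂P
      ≤ ((p : ℝ) / (τ * (2 * (B:ℝ)) ^ m)) *
          ∑ k ∈ Finset.Nat.antidiagonalTuple (2 * B) m,
            (Nat.multinomial Finset.univ k : ℝ) *
              ∫ l, (q l / p) ^ ((Finset.univ.filter (fun b => k b ≠ 0)).card) ∂μ :=
  stmt17_general P μ p S τ hτ m B q hqmeas hq V hVmeas hV01 hjoint pihat hpihat
end
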